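/- Let F₁ and F₂ be edge sets of a hypergraph G such that V(F₁) ∩ V(F₂) = ∂(F₁) ∩ ∂(F₂). Let 𝒯ᵢ be a branch-decomposition of Fᵢ for i = 1, 2, and let 𝒯 be the composition of 𝒯₁ and 𝒯₂. Then the width of 𝒯 is at most the largest of the width of 𝒯₁, the width of 𝒯₂, and |∂(F₁ ∪ F₂)|. -/

import Mathlib

open Finset

universe u

/-- Rooted binary trees whose leaves carry labels of type `α`.  Every node has
at most two children; each leaf carries the edge assigned to it, so the leaf
map `φ` is built into the tree. -/
inductive BTree (α : Type u) : Type u where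
  | leaf : α → BTree α
  | node1 : BTree α → BTree α
  | node2 : BTree α → BTree α → BTree α

namespace BTree

variable {α : Type u}

/-- The multiset of labels of the leaves of a tree. -/
def leafLabels : BTree α → Multiset α
  | leaf a => {a}
  | node1 c => leafLabels c
  | node2 c₁ c₂ => leafLabels c₁ + leafLabels c₂

/-- `s.Occurs t` : `s` is (the subtree rooted at) a node of `t`. -/
def Occurs (s : BTree α) : BTree α → Prop
  | leaf a => s = leaf a
  | node1 c => s = node1 c ∨ Occurs s c
  | node2 c₁ c₂ => s = node2 c₁ c₂ ∨ Occurs s c₁ ∨ Occurs s c₂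

/-- A tree is full if every internal node has exactly two children. -/
def IsFull : BTree α → Prop
  | leaf _ => True
  | node1 _ => False
  | node2 c₁ c₂ => IsFull c₁ ∧ IsFull c₂

/-- The list of all (subtrees rooted at) nodes of a tree. -/
def nodes : BTree α → List (BTree α)
  | leaf a => [leaf a]
  | node1 c => node1 c :: nodes c
  | node2 c₁ c₂ => node2 c₁ c₂ :: (nodes c₁ ++ nodes c₂)

end BTree

variable {V : Type u} [DecidableEq V] [Fintype V]

/-- `vtxs F` is `V(F)` : the union of the hyperedges in `F`. -/
def vtxs (F : Finset (Finset V)) : Finset V := F.sup id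

/-- The boundary `∂(F) = V(F) ∩ V(E ∖ F)` of an edge set `F` of the hypergraph
with edge set `E`. -/
def ebnd (E F : Finset (Finset V)) : Finset V := vtxs F ∩ vtxs (E \ F)

/-- `t` is a (relaxed) branch-decomposition of the edge set `F` : the set of
leaf labels is exactly `F`, i.e. the leaf map is a surjection onto `F`. -/
def IsBD (F : Finset (Finset V)) (t : BTree (Finset V)) : Prop :=
  t.leafLabels.toFinset = F

/-- The lower edge set `L(p)` of a node `p` : the edges assigned to the leaves
in the subtree rooted at `p`. -/
def lowerSet (p : BTree (Finset V)) : Finset (Finset V) := p.leafLabels.toFinset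

/-- The upper edge set `U(p)` of a node `p` of a branch-decomposition `t` of
`F` in the hypergraph with edge set `E` : the edges assigned to leaves outside
the subtree rooted at `p`, together with `E ∖ F`. -/
def upperSet (E F : Finset (Finset V)) (t p : BTree (Finset V)) : Finset (Finset V) :=
  (t.leafLabels - p.leafLabels).toFinset ∪ (E \ F)

/-- The middle set `V(L(p)) ∩ V(U(p))` of a node `p`. -/
def midSet (E F : Finset (Finset V)) (t p : BTree (Finset V)) : Finset V :=
  vtxs (lowerSet p) ∩ vtxs (upperSet E F t p)

/-- The width of a branch-decomposition: the maximum order of a node. -/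
def bdWidth (E F : Finset (Finset V)) (t : BTree (Finset V)) : ℕ :=
  (t.nodes.map (fun p => (midSet E F t p).card)).foldr max 0

/-- The branchwidth `bw_G(F)` of an edge set `F` of the hypergraph with edge
set `E` : the minimum width of a branch-decomposition of `F`. -/
noncomputable def ebw (E F : Finset (Finset V)) : ℕ :=
  sInf {w | ∃ t : BTree (Finset V), IsBD F t ∧ bdWidth E F t = w}

/-- The branchwidth of a hypergraph given by its edge set. -/
noncomputable def hbw (E : Finset (Finset V)) : ℕ := ebw E E

/-! At a node `p` of `t₁`, composing only adds `F₂` to the upper edge set `U(p)`. A vertex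
of `V(L(p)) ⊆ V(F₁)` that is newly covered by `F₂` lies in `V(F₁) ∩ V(F₂) = ∂(F₁) ∩ ∂(F₂)`,
so it was already covered by `E ∖ F₁ ⊆ U(p)`: middle sets inside `t₁` (and likewise `t₂`)
do not grow. The middle set of the new root is `∂(F₁ ∪ F₂)`. -/

namespace BTree

variable {α : Type u}

theorem leafLabels_le_of_mem_nodes {p t : BTree α} (h : p ∈ t.nodes) :
    p.leafLabels ≤ t.leafLabels := by
  induction t with
  | leaf a =>
    rw [nodes, List.mem_singleton] at h
    rw [h]
  | node1 c ih =>
    rcases List.mem_cons.mp h with rfl | h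
    · exact le_rfl
    · exact ih h
  | node2 c₁ c₂ ih₁ ih₂ =>
    simp only [nodes, List.mem_cons, List.mem_append] at h
    rcases h with rfl | h | h
    · exact le_rfl
    · exact (ih₁ h).trans (Multiset.le_add_right _ _)
    · exact (ih₂ h).trans (Multiset.le_add_left _ _)

end BTree

open BTree

section

omit [Fintype V]

theorem vtxs_mono {A B : Finset (Finset V)} (h : A ⊆ B) : vtxs A ⊆ vtxs B :=
  Finset.sup_mono h

theorem vtxs_union (A B : Finset (Finset V)) : vtxs (A ∪ B) = vtxs A ∪ vtxs B :=
  Finset.sup_union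

theorem lowerSet_subset_of_mem_nodes {F : Finset (Finset V)} {t p : BTree (Finset V)}
    (ht : IsBD F t) (hp : p ∈ t.nodes) : lowerSet p ⊆ F :=
  ht ▸ Multiset.toFinset_subset.mpr (Multiset.subset_of_le (leafLabels_le_of_mem_nodes hp))

section Width

variable {E F : Finset (Finset V)} {t : BTree (Finset V)}

theorem card_midSet_le_bdWidth {p : BTree (Finset V)} (hp : p ∈ t.nodes) :
    (midSet E F t p).card ≤ bdWidth E F t :=
  List.le_max_of_le (List.mem_map_of_mem hp) le_rfl

theorem bdWidth_le {w : ℕ} (h : ∀ p ∈ t.nodes, (midSet E F t p).card ≤ w) :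
    bdWidth E F t ≤ w :=
  List.max_le_of_forall_le _ w (by simpa using h)

end Width

section Composition

variable {E F₁ F₂ : Finset (Finset V)} {t₁ t₂ : BTree (Finset V)}

theorem midSet_node2_self (h₁ : IsBD F₁ t₁) (h₂ : IsBD F₂ t₂) :
    midSet E (F₁ ∪ F₂) (node2 t₁ t₂) (node2 t₁ t₂) = ebnd E (F₁ ∪ F₂) := by
  rw [midSet, ebnd, upperSet, lowerSet, leafLabels, Multiset.toFinset_add, h₁, h₂, tsub_self,
    Multiset.toFinset_zero, Finset.empty_union]

theorem midSet_node2_comm (p : BTree (Finset V)) :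
    midSet E (F₁ ∪ F₂) (node2 t₁ t₂) p = midSet E (F₂ ∪ F₁) (node2 t₂ t₁) p := by
  rw [midSet, midSet, upperSet, upperSet, leafLabels, leafLabels, add_comm, Finset.union_comm F₁ F₂]

theorem upperSet_node2_subset (h₂ : IsBD F₂ t₂) (p : BTree (Finset V)) :
    upperSet E (F₁ ∪ F₂) (node2 t₁ t₂) p ⊆ upperSet E F₁ t₁ p ∪ F₂ := by
  have hleaves : (t₁.leafLabels + t₂.leafLabels - p.leafLabels).toFinset ⊆
      (t₁.leafLabels - p.leafLabels).toFinset ∪ F₂ := by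
    rw [← h₂, ← Multiset.toFinset_add]
    exact Multiset.toFinset_subset.mpr (Multiset.subset_of_le add_tsub_le_tsub_add)
  have hrest : E \ (F₁ ∪ F₂) ⊆ E \ F₁ := Finset.sdiff_subset_sdiff le_rfl Finset.subset_union_left
  rw [upperSet, upperSet, leafLabels]
  exact Finset.union_subset
    (hleaves.trans (Finset.union_subset_union Finset.subset_union_left le_rfl))
    (hrest.trans (Finset.subset_union_right.trans Finset.subset_union_left))

theorem midSet_node2_subset_left (hmeet : vtxs F₁ ∩ vtxs F₂ = ebnd E F₁ ∩ ebnd E F₂)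
    (h₁ : IsBD F₁ t₁) (h₂ : IsBD F₂ t₂) {p : BTree (Finset V)} (hp : p ∈ t₁.nodes) :
    midSet E (F₁ ∪ F₂) (node2 t₁ t₂) p ⊆ midSet E F₁ t₁ p := by
  intro v hv
  obtain ⟨hlow, hup⟩ := Finset.mem_inter.mp hv
  refine Finset.mem_inter.mpr ⟨hlow, ?_⟩
  have hup' := vtxs_mono (upperSet_node2_subset h₂ p) hup
  rw [vtxs_union, Finset.mem_union] at hup'
  refine hup'.elim id fun hvF₂ => ?_
  have hvF₁ : v ∈ vtxs F₁ := vtxs_mono (lowerSet_subset_of_mem_nodes h₁ hp) hlow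
  have hbnd : v ∈ ebnd E F₁ := (Finset.mem_inter.mp (hmeet ▸ Finset.mem_inter.mpr ⟨hvF₁, hvF₂⟩)).1
  exact vtxs_mono Finset.subset_union_right (Finset.mem_inter.mp hbnd).2

theorem midSet_node2_subset_right (hmeet : vtxs F₁ ∩ vtxs F₂ = ebnd E F₁ ∩ ebnd E F₂)
    (h₁ : IsBD F₁ t₁) (h₂ : IsBD F₂ t₂) {p : BTree (Finset V)} (hp : p ∈ t₂.nodes) :
    midSet E (F₁ ∪ F₂) (node2 t₁ t₂) p ⊆ midSet E F₂ t₂ p := by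
  rw [midSet_node2_comm]
  refine midSet_node2_subset_left ?_ h₂ h₁ hp
  rw [Finset.inter_comm, hmeet, Finset.inter_comm]

end Composition

end

theorem composition_width_le_general (E F₁ F₂ : Finset (Finset V))
    (hmeet : vtxs F₁ ∩ vtxs F₂ = ebnd E F₁ ∩ ebnd E F₂)
    (t₁ t₂ : BTree (Finset V)) (h₁ : IsBD F₁ t₁) (h₂ : IsBD F₂ t₂) :
    bdWidth E (F₁ ∪ F₂) (BTree.node2 t₁ t₂) ≤
      max (max (bdWidth E F₁ t₁) (bdWidth E F₂ t₂)) (ebnd E (F₁ ∪ F₂)).card := by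
  refine bdWidth_le fun p hp => ?_
  simp only [nodes, List.mem_cons, List.mem_append] at hp
  rcases hp with rfl | hp | hp
  · rw [midSet_node2_self h₁ h₂]
    exact le_max_right _ _
  · calc (midSet E (F₁ ∪ F₂) (node2 t₁ t₂) p).card
        ≤ (midSet E F₁ t₁ p).card := Finset.card_le_card (midSet_node2_subset_left hmeet h₁ h₂ hp)
      _ ≤ bdWidth E F₁ t₁ := card_midSet_le_bdWidth hp
      _ ≤ _ := le_max_of_le_left (le_max_left _ _)
  · calc (midSet E (F₁ ∪ F₂) (node2 t₁ t₂) p).card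
        ≤ (midSet E F₂ t₂ p).card := Finset.card_le_card (midSet_node2_subset_right hmeet h₁ h₂ hp)
      _ ≤ bdWidth E F₂ t₂ := card_midSet_le_bdWidth hp
      _ ≤ _ := le_max_of_le_left (le_max_right _ _)

/-- If `V(F₁) ∩ V(F₂) = ∂(F₁) ∩ ∂(F₂)` then the width of the composition of
branch-decompositions of `F₁` and `F₂` is at most the largest of the two widths
and `|∂(F₁ ∪ F₂)|`. -/
theorem composition_width_le (E F₁ F₂ : Finset (Finset V))
    (hF₁E : F₁ ⊆ E) (hF₂E : F₂ ⊆ E) (hne : ∀ e ∈ E, e.Nonempty)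
    (hmeet : vtxs F₁ ∩ vtxs F₂ = ebnd E F₁ ∩ ebnd E F₂)
    (t₁ t₂ : BTree (Finset V)) (h₁ : IsBD F₁ t₁) (h₂ : IsBD F₂ t₂) :
    bdWidth E (F₁ ∪ F₂) (BTree.node2 t₁ t₂) ≤
      max (max (bdWidth E F₁ t₁) (bdWidth E F₂ t₂)) (ebnd E (F₁ ∪ F₂)).card :=
  composition_width_le_general E F₁ F₂ hmeet t₁ t₂ h₁ h₂
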